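/- Let 1 < p < ∞ and define H(x, τ) = (4πτ)^{−1/2} e^{−x²/(4τ)} ( x²/(4τ²) − 1/(2τ) ) for x ∈ ℝ and τ > 0 (this is the second spatial derivative ∂²ₓΓ₁ of the one-dimensional heat kernel Γ₁(x,τ) = (4πτ)^{−1/2} e^{−x²/(4τ)}). There exists a constant c > 0 such that for every M ≥ 0 and every measurable function g : ℝ → ℝ with |g| ≤ M almost everywhere and g supported in the interval (3/4, 7/8), both of the following hold: (i) ∫₁^∞ ∫₀^∞ | ∫₀ᵗ H(x, t−s) g(s) ds |^p dx dt ≤ c · M^p (outer integral in t over (1, ∞), inner in x over (0, ∞)); (ii) ∫₁^∞ ∫₀^∞ | ∫₀ᵗ H(x, t−s) g(s) ds |^p dt dx ≤ c · M^p (outer integral in x over (1, ∞), inner in t over (0, ∞)). -/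

import Mathlib

/-
The kernel obeys |H(x, τ)| ≲ min(τ^(-3/2), 1 / (τ x), 1 / x³). Since g lives on (3/4, 7/8),
for t > 1 the elapsed time t - s is at least t / 8, so in (i) the potential is bounded by
M · min(t^(-3/2), 1 / (t x)), and for x > 1 in (ii) by M · min(x^(-3), 1 / (t x)). The p-th
power of such a minimum integrates over the inner variable (splitting at x = √t, resp. t = x²)
to a multiple of M^p t^((1 - 3p)/2), resp. M^p x^(2 - 3p), and both are integrable at infinity
because p > 1.
-/

open MeasureTheory Real Set

/-- `H x τ = ∂²ₓ Γ₁(x,τ)` where `Γ₁` is the one-dimensional heat kernel. -/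
noncomputable def heatKernelD2 (x τ : ℝ) : ℝ :=
  (Real.sqrt (4 * π * τ))⁻¹ * Real.exp (-x ^ 2 / (4 * τ)) *
    (x ^ 2 / (4 * τ ^ 2) - 1 / (2 * τ))

theorem heatKernelD2_eq (x : ℝ) {τ : ℝ} (hτ : 0 < τ) :
    heatKernelD2 x τ =
      (x ^ 2 / (4 * τ) - 1 / 2) * exp (-(x ^ 2 / (4 * τ))) / (2 * √π * (√τ * τ)) := by
  have hsqrt : √(4 * π * τ) = 2 * √π * √τ := by
    rw [sqrt_mul (by positivity), sqrt_mul (by norm_num), show (4 : ℝ) = 2 ^ 2 by norm_num,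
      sqrt_sq zero_le_two]
  have := sqrt_pos.2 hτ
  unfold heatKernelD2
  rw [hsqrt, neg_div]
  field_simp

theorem abs_heatKernelD2_le (x : ℝ) {τ : ℝ} (hτ : 0 < τ) :
    |heatKernelD2 x τ| ≤
      (x ^ 2 / (4 * τ) + 1 / 2) * exp (-(x ^ 2 / (4 * τ))) / (2 * √π * (√τ * τ)) := by
  have hu : 0 ≤ x ^ 2 / (4 * τ) := by positivity
  rw [heatKernelD2_eq x hτ, abs_div, abs_mul, abs_of_pos (exp_pos _),
    abs_of_pos (show 0 < 2 * √π * (√τ * τ) by positivity)]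
  gcongr
  exact abs_le.2 ⟨by linarith, by linarith⟩

theorem one_le_sqrt_pi : 1 ≤ √π :=
  one_le_sqrt.2 (by linarith [pi_gt_three])

theorem abs_heatKernelD2_le_rpow (x : ℝ) {τ : ℝ} (hτ : 0 < τ) :
    |heatKernelD2 x τ| ≤ τ ^ (-3 / 2 : ℝ) := by
  set u := x ^ 2 / (4 * τ)
  have hexp : (u + 1 / 2) * exp (-u) ≤ 1 := by
    rw [exp_neg, ← div_eq_mul_inv, div_le_one (exp_pos u)]
    linarith [add_one_le_exp u]
  calc |heatKernelD2 x τ| ≤ (u + 1 / 2) * exp (-u) / (2 * √π * (√τ * τ)) :=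
        abs_heatKernelD2_le x hτ
    _ ≤ 1 / (1 * (√τ * τ)) := by
        have := sqrt_pos.2 hτ
        gcongr
        linarith [one_le_sqrt_pi]
    _ = τ ^ (-3 / 2 : ℝ) := by
        rw [one_mul, sqrt_eq_rpow, ← rpow_add_one hτ.ne', one_div, ← rpow_neg hτ.le]
        norm_num

/-- AM-GM `2 √u ≤ 1 + u` for `u = x² / (4τ)`. -/
theorem le_sqrt_mul_one_add_sq_div (x : ℝ) {τ : ℝ} (hτ : 0 < τ) :
    x ≤ √τ * (1 + x ^ 2 / (4 * τ)) := by
  have hst := sqrt_pos.2 hτ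
  have key : √τ * (1 + x ^ 2 / (4 * τ)) - x = (2 * √τ - x) ^ 2 / (4 * √τ) := by
    field_simp
    linear_combination x ^ 2 * sq_sqrt hτ.le
  have : 0 ≤ (2 * √τ - x) ^ 2 / (4 * √τ) := by positivity
  linarith

theorem abs_heatKernelD2_le_div_mul {x τ : ℝ} (hx : 0 < x) (hτ : 0 < τ) :
    |heatKernelD2 x τ| ≤ 2 / (τ * x) := by
  set u := x ^ 2 / (4 * τ)
  have hu : 0 ≤ u := by positivity
  have hst := sqrt_pos.2 hτ
  have hexp : (u + 1 / 2) * (1 + u) * exp (-u) ≤ 4 := by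
    rw [exp_neg, ← div_eq_mul_inv, div_le_iff₀ (exp_pos u)]
    nlinarith [quadratic_le_exp_of_nonneg hu]
  have hxu : τ * x ≤ τ * (√τ * (1 + u)) :=
    mul_le_mul_of_nonneg_left (le_sqrt_mul_one_add_sq_div x hτ) hτ.le
  calc |heatKernelD2 x τ| ≤ (u + 1 / 2) * exp (-u) / (2 * √π * (√τ * τ)) :=
        abs_heatKernelD2_le x hτ
    _ ≤ (u + 1 / 2) * exp (-u) / (2 * 1 * (√τ * τ)) := by
        gcongr
        exact one_le_sqrt_pi
    _ ≤ 2 / (τ * x) := by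
        rw [div_le_div_iff₀ (by positivity) (by positivity)]
        calc (u + 1 / 2) * exp (-u) * (τ * x)
            ≤ (u + 1 / 2) * exp (-u) * (τ * (√τ * (1 + u))) := by gcongr
          _ = (u + 1 / 2) * (1 + u) * exp (-u) * (√τ * τ) := by ring
          _ ≤ 4 * (√τ * τ) := by gcongr
          _ = 2 * (2 * 1 * (√τ * τ)) := by ring

theorem abs_heatKernelD2_le_div_pow {x τ : ℝ} (hx : 0 < x) (hτ : 0 < τ) :
    |heatKernelD2 x τ| ≤ 40 / x ^ 3 := by
  set u := x ^ 2 / (4 * τ)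
  have hu : 0 ≤ u := by positivity
  have hst := sqrt_pos.2 hτ
  have hexp : u * (u + 1 / 2) * (1 + u) * exp (-u) ≤ 20 := by
    rw [exp_neg, ← div_eq_mul_inv, div_le_iff₀ (exp_pos u)]
    have := sum_le_exp_of_nonneg hu 4
    simp only [Finset.sum_range_succ, Finset.sum_range_zero, Nat.factorial] at this
    norm_num at this
    nlinarith [sq_nonneg u]
  have hx3 : x ^ 3 ≤ 4 * u * τ * (√τ * (1 + u)) := by
    have hx2 : x ^ 2 = 4 * u * τ := by simp only [u]; field_simp
    rw [pow_succ, hx2]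
    gcongr
    exact le_sqrt_mul_one_add_sq_div x hτ
  calc |heatKernelD2 x τ| ≤ (u + 1 / 2) * exp (-u) / (2 * √π * (√τ * τ)) :=
        abs_heatKernelD2_le x hτ
    _ ≤ (u + 1 / 2) * exp (-u) / (2 * 1 * (√τ * τ)) := by
        gcongr
        exact one_le_sqrt_pi
    _ ≤ 40 / x ^ 3 := by
        rw [div_le_div_iff₀ (by positivity) (by positivity)]
        calc (u + 1 / 2) * exp (-u) * x ^ 3
            ≤ (u + 1 / 2) * exp (-u) * (4 * u * τ * (√τ * (1 + u))) := by gcongr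
          _ = 4 * (u * (u + 1 / 2) * (1 + u) * exp (-u)) * (√τ * τ) := by ring
          _ ≤ 4 * 20 * (√τ * τ) := by gcongr
          _ = 40 * (2 * 1 * (√τ * τ)) := by ring

theorem abs_setIntegral_mul_le_of_support_subset {X : Type*} [MeasurableSpace X]
    {μ : Measure X} {f g : X → ℝ} {A S : Set X} {B M : ℝ} (hA : MeasurableSet A)
    (hAS : μ (A ∩ S) < ⊤) (hf : ∀ x ∈ A ∩ S, |f x| ≤ B) (hg : ∀ᵐ x ∂μ, |g x| ≤ M)
    (hgS : Function.support g ⊆ S) :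
    |∫ x in A, f x * g x ∂μ| ≤ B * M * μ.real (A ∩ S) := by
  have hvanish : ∀ x ∈ A \ (A ∩ S), f x * g x = 0 := fun x hx => by
    rw [Function.notMem_support.1 fun h => hx.2 ⟨hx.1, hgS h⟩, mul_zero]
  rw [setIntegral_eq_of_subset_of_forall_sdiff_eq_zero (μ := μ) (f := fun x => f x * g x) hA
    inter_subset_left hvanish, ← norm_eq_abs]
  refine norm_setIntegral_le_of_norm_le_const_ae' hAS (hg.mono fun x hgx hx => ?_)
  rw [norm_mul, norm_eq_abs, norm_eq_abs]
  exact mul_le_mul (hf x hx) hgx (abs_nonneg _) ((abs_nonneg _).trans (hf x hx))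

theorem lintegral_Ioi_mul_rpow {K q a : ℝ} (hK : 0 ≤ K) (hq : q < -1) (ha : 0 < a) :
    ∫⁻ y in Ioi a, ENNReal.ofReal (K * y ^ q) = ENNReal.ofReal (K * a ^ (q + 1) / (-q - 1)) := by
  have hint : IntegrableOn (fun y => K * y ^ q) (Ioi a) :=
    (integrableOn_Ioi_rpow_of_lt hq ha).const_mul K
  have hnonneg : 0 ≤ᵐ[volume.restrict (Ioi a)] fun y => K * y ^ q :=
    (ae_restrict_mem measurableSet_Ioi).mono fun y hy =>
      mul_nonneg hK (rpow_nonneg (ha.trans hy).le q)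
  rw [← ofReal_integral_eq_lintegral_ofReal hint hnonneg, integral_const_mul,
    integral_Ioi_rpow_of_lt hq ha]
  congr 1
  rw [neg_div, ← div_neg, neg_add', mul_div_assoc]

theorem lintegral_Ioi_zero_rpow_abs_le {f : ℝ → ℝ} {p A b : ℝ} (hp : 1 < p) (hb : 0 < b)
    (hnear : ∀ y ∈ Ioc 0 b, |f y| ≤ A) (hfar : ∀ y ∈ Ioi b, |f y| ≤ A * b / y) :
    ∫⁻ y in Ioi 0, ENNReal.ofReal (|f y| ^ p) ≤ ENNReal.ofReal (p / (p - 1) * A ^ p * b) := by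
  have hA : 0 ≤ A := (abs_nonneg _).trans (hnear b ⟨hb, le_rfl⟩)
  have hp1 : 0 < p - 1 := by linarith
  have hnear' : ∫⁻ y in Ioc 0 b, ENNReal.ofReal (|f y| ^ p) ≤ ENNReal.ofReal (A ^ p * b) :=
    calc ∫⁻ y in Ioc 0 b, ENNReal.ofReal (|f y| ^ p)
        ≤ ∫⁻ _ in Ioc 0 b, ENNReal.ofReal (A ^ p) :=
          setLIntegral_mono measurable_const fun y hy => ENNReal.ofReal_le_ofReal <|
            rpow_le_rpow (abs_nonneg _) (hnear y hy) (by linarith)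
      _ = ENNReal.ofReal (A ^ p * b) := by
          rw [setLIntegral_const, volume_Ioc, sub_zero, ENNReal.ofReal_mul (by positivity)]
  have hfar' : ∫⁻ y in Ioi b, ENNReal.ofReal (|f y| ^ p) ≤ ENNReal.ofReal (A ^ p * b / (p - 1)) :=
    calc ∫⁻ y in Ioi b, ENNReal.ofReal (|f y| ^ p)
        ≤ ∫⁻ y in Ioi b, ENNReal.ofReal ((A * b) ^ p * y ^ (-p)) := by
          refine setLIntegral_mono (by fun_prop) fun y hy => ENNReal.ofReal_le_ofReal ?_
          have hy : 0 < y := hb.trans hy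
          calc |f y| ^ p ≤ (A * b / y) ^ p :=
                rpow_le_rpow (abs_nonneg _) (hfar y ‹_›) (by linarith)
            _ = (A * b) ^ p * y ^ (-p) := by
                rw [div_rpow (by positivity) hy.le, rpow_neg hy.le, div_eq_mul_inv]
      _ = ENNReal.ofReal (A ^ p * b / (p - 1)) := by
          rw [lintegral_Ioi_mul_rpow (by positivity) (by linarith) hb, mul_rpow hA hb.le,
            mul_assoc, ← rpow_add hb, neg_neg, show p + (-p + 1) = 1 by ring, rpow_one,
            mul_div_assoc]
  rw [← Ioc_union_Ioi_eq_Ioi hb.le, lintegral_union measurableSet_Ioi Ioc_disjoint_Ioi_same]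
  refine (add_le_add hnear' hfar').trans ?_
  rw [← ENNReal.ofReal_add (by positivity) (by positivity)]
  apply le_of_eq
  congr 1
  field_simp
  ring

noncomputable def heatPotentialD2 (g : ℝ → ℝ) (x t : ℝ) : ℝ :=
  ∫ s in Ioo 0 t, heatKernelD2 x (t - s) * g s

section heatPotentialD2

variable {p M : ℝ} {g : ℝ → ℝ}

theorem abs_heatPotentialD2_le {x t B : ℝ} (hM : 0 ≤ M) (hB : 0 ≤ B)
    (hg : ∀ᵐ s, |g s| ≤ M) (hgS : Function.support g ⊆ Ioo (3 / 4) (7 / 8))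
    (hH : ∀ s ∈ Ioo (3 / 4 : ℝ) (7 / 8), s < t → |heatKernelD2 x (t - s)| ≤ B) :
    |heatPotentialD2 g x t| ≤ M * B := by
  have hvol : volume (Ioo 0 t ∩ Ioo (3 / 4 : ℝ) (7 / 8)) ≤ ENNReal.ofReal 1 :=
    (measure_mono inter_subset_right).trans (by rw [volume_Ioo]; gcongr; norm_num)
  calc |heatPotentialD2 g x t|
      ≤ B * M * volume.real (Ioo 0 t ∩ Ioo (3 / 4 : ℝ) (7 / 8)) :=
        abs_setIntegral_mul_le_of_support_subset measurableSet_Ioo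
          (hvol.trans_lt ENNReal.ofReal_lt_top) (fun s hs => hH s hs.2 hs.1.2) hg hgS
    _ ≤ B * M * 1 := by
        gcongr
        exact ENNReal.toReal_le_of_le_ofReal zero_le_one hvol
    _ = M * B := by ring

theorem lintegral_space_heatPotentialD2_le (hp : 1 < p) (hM : 0 ≤ M)
    (hg : ∀ᵐ s, |g s| ≤ M) (hgS : Function.support g ⊆ Ioo (3 / 4) (7 / 8)) {t : ℝ}
    (ht : 1 < t) :
    ∫⁻ x in Ioi 0, ENNReal.ofReal (|heatPotentialD2 g x t| ^ p) ≤
      ENNReal.ofReal (p / (p - 1) * 2 ^ p / 8 ^ ((1 - 3 * p) / 2) * M ^ p *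
        t ^ ((1 - 3 * p) / 2)) := by
  have hT : 0 < t / 8 := by positivity
  have hτ : ∀ s ∈ Ioo (3 / 4 : ℝ) (7 / 8), s < t → 0 < t - s ∧ t / 8 ≤ t - s :=
    fun s hs _ => ⟨by linarith [hs.2], by linarith [hs.2]⟩
  set T := t / 8
  set b := T ^ (1 / 2 : ℝ)
  have hb : 0 < b := by positivity
  have hTb : T ^ (-3 / 2 : ℝ) * b = T⁻¹ := by
    rw [← rpow_add hT, ← rpow_neg_one]; norm_num
  have hnear : ∀ x ∈ Ioc 0 b, |heatPotentialD2 g x t| ≤ 2 * M * T ^ (-3 / 2 : ℝ) := by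
    intro x _
    refine (abs_heatPotentialD2_le (B := T ^ (-3 / 2 : ℝ)) hM (by positivity) hg hgS
      fun s hs hst => ?_).trans ?_
    · obtain ⟨hτ0, hτT⟩ := hτ s hs hst
      exact (abs_heatKernelD2_le_rpow x hτ0).trans (rpow_le_rpow_of_nonpos hT hτT (by norm_num))
    · have : 0 ≤ M * T ^ (-3 / 2 : ℝ) := by positivity
      linarith
  have hfar : ∀ x ∈ Ioi b, |heatPotentialD2 g x t| ≤ 2 * M * T ^ (-3 / 2 : ℝ) * b / x := by
    intro x hx
    have hx : 0 < x := hb.trans hx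
    refine (abs_heatPotentialD2_le (B := 2 / (T * x)) hM (by positivity) hg hgS
      fun s hs hst => ?_).trans_eq ?_
    · obtain ⟨hτ0, hτT⟩ := hτ s hs hst
      exact (abs_heatKernelD2_le_div_mul hx hτ0).trans
        (by gcongr : 2 / ((t - s) * x) ≤ 2 / (T * x))
    · rw [mul_assoc (2 * M), hTb]
      field_simp
  refine (lintegral_Ioi_zero_rpow_abs_le hp hb hnear hfar).trans_eq (congrArg ENNReal.ofReal ?_)
  have hTq : T ^ (-3 / 2 * p) * b = (t / 8) ^ ((1 - 3 * p) / 2) := by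
    rw [← rpow_add hT]; congr 1; ring
  rw [mul_rpow (by positivity) (by positivity), mul_rpow (by norm_num) hM, ← rpow_mul hT.le,
    mul_assoc, mul_assoc, mul_assoc, hTq, div_rpow (by positivity) (by norm_num)]
  ring

theorem lintegral_time_heatPotentialD2_le (hp : 1 < p) (hM : 0 ≤ M)
    (hg : ∀ᵐ s, |g s| ≤ M) (hgS : Function.support g ⊆ Ioo (3 / 4) (7 / 8)) {x : ℝ}
    (hx : 1 < x) :
    ∫⁻ t in Ioi 0, ENNReal.ofReal (|heatPotentialD2 g x t| ^ p) ≤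
      ENNReal.ofReal (p / (p - 1) * 40 ^ p * M ^ p * x ^ (2 - 3 * p)) := by
  have hx0 : 0 < x := by linarith
  have hnear : ∀ t ∈ Ioc 0 (x ^ 2), |heatPotentialD2 g x t| ≤ 40 * M / x ^ 3 := by
    intro t _
    refine (abs_heatPotentialD2_le (B := 40 / x ^ 3) hM (by positivity) hg hgS
      fun s _ hst => abs_heatKernelD2_le_div_pow hx0 (sub_pos.2 hst)).trans_eq ?_
    ring
  have hfar : ∀ t ∈ Ioi (x ^ 2), |heatPotentialD2 g x t| ≤ 40 * M / x ^ 3 * x ^ 2 / t := by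
    intro t ht
    have ht : 1 < t := (one_lt_pow₀ hx two_ne_zero).trans ht
    have ht0 : 0 < t := by linarith
    refine (abs_heatPotentialD2_le (B := 16 / (t * x)) hM (by positivity) hg hgS
      fun s hs hst => ?_).trans ?_
    · have hτ : t / 8 ≤ t - s := by linarith [hs.2]
      calc |heatKernelD2 x (t - s)| ≤ 2 / ((t - s) * x) :=
            abs_heatKernelD2_le_div_mul hx0 (sub_pos.2 hst)
        _ ≤ 2 / (t / 8 * x) := by gcongr
        _ = 16 / (t * x) := by field_simp; ring
    · calc M * (16 / (t * x)) ≤ M * (40 / (t * x)) := by gcongr; norm_num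
        _ = 40 * M / x ^ 3 * x ^ 2 / t := by field_simp
  refine (lintegral_Ioi_zero_rpow_abs_le hp (by positivity) hnear hfar).trans_eq
    (congrArg ENNReal.ofReal ?_)
  rw [div_rpow (by positivity) (by positivity), mul_rpow (by norm_num) hM,
    ← rpow_natCast x 3, ← rpow_natCast x 2, ← rpow_mul hx0.le, rpow_sub hx0]
  push_cast
  ring

theorem lintegral_time_lintegral_space_heatPotentialD2_le (hp : 1 < p)
    (hM : 0 ≤ M) (hg : ∀ᵐ s, |g s| ≤ M) (hgS : Function.support g ⊆ Ioo (3 / 4) (7 / 8)) :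
    ∫⁻ t in Ioi 1, ∫⁻ x in Ioi 0, ENNReal.ofReal (|heatPotentialD2 g x t| ^ p) ≤
      ENNReal.ofReal (p / (p - 1) * 2 ^ p / 8 ^ ((1 - 3 * p) / 2) / ((3 * p - 3) / 2) * M ^ p) := by
  have hp1 : 0 < p - 1 := by linarith
  calc ∫⁻ t in Ioi 1, ∫⁻ x in Ioi 0, ENNReal.ofReal (|heatPotentialD2 g x t| ^ p)
      ≤ ∫⁻ t in Ioi 1, ENNReal.ofReal (p / (p - 1) * 2 ^ p / 8 ^ ((1 - 3 * p) / 2) * M ^ p *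
          t ^ ((1 - 3 * p) / 2)) :=
        setLIntegral_mono (by fun_prop) fun t ht =>
          lintegral_space_heatPotentialD2_le hp hM hg hgS ht
    _ = _ := by
        rw [lintegral_Ioi_mul_rpow (by positivity) (by linarith) one_pos, one_rpow]
        congr 1
        ring

theorem lintegral_space_lintegral_time_heatPotentialD2_le (hp : 1 < p)
    (hM : 0 ≤ M) (hg : ∀ᵐ s, |g s| ≤ M) (hgS : Function.support g ⊆ Ioo (3 / 4) (7 / 8)) :
    ∫⁻ x in Ioi 1, ∫⁻ t in Ioi 0, ENNReal.ofReal (|heatPotentialD2 g x t| ^ p) ≤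
      ENNReal.ofReal (p / (p - 1) * 40 ^ p / (3 * p - 3) * M ^ p) := by
  have hp1 : 0 < p - 1 := by linarith
  calc ∫⁻ x in Ioi 1, ∫⁻ t in Ioi 0, ENNReal.ofReal (|heatPotentialD2 g x t| ^ p)
      ≤ ∫⁻ x in Ioi 1, ENNReal.ofReal (p / (p - 1) * 40 ^ p * M ^ p * x ^ (2 - 3 * p)) :=
        setLIntegral_mono (by fun_prop) fun x hx =>
          lintegral_time_heatPotentialD2_le hp hM hg hgS hx
    _ = _ := by
        rw [lintegral_Ioi_mul_rpow (by positivity) (by linarith) one_pos, one_rpow]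
        congr 1
        ring

end heatPotentialD2

theorem stmt6 (p : ℝ) (hp : 1 < p) :
    ∃ c : ℝ, 0 < c ∧ ∀ M : ℝ, 0 ≤ M → ∀ g : ℝ → ℝ, Measurable g →
      (∀ᵐ s ∂(volume : Measure ℝ), |g s| ≤ M) →
      Function.support g ⊆ Ioo (3 / 4 : ℝ) (7 / 8) →
      (∫⁻ t in Ioi (1 : ℝ), ∫⁻ x in Ioi (0 : ℝ),
          ENNReal.ofReal (|∫ s in Ioo (0 : ℝ) t, heatKernelD2 x (t - s) * g s| ^ p)
        ≤ ENNReal.ofReal (c * M ^ p)) ∧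
      (∫⁻ x in Ioi (1 : ℝ), ∫⁻ t in Ioi (0 : ℝ),
          ENNReal.ofReal (|∫ s in Ioo (0 : ℝ) t, heatKernelD2 x (t - s) * g s| ^ p)
        ≤ ENNReal.ofReal (c * M ^ p)) := by
  have hp0 : 0 < p := by linarith
  have hp1 : 0 < p - 1 := by linarith
  have hp3 : 0 < 3 * p - 3 := by linarith
  set c₁ := p / (p - 1) * 2 ^ p / 8 ^ ((1 - 3 * p) / 2) / ((3 * p - 3) / 2)
  set c₂ := p / (p - 1) * 40 ^ p / (3 * p - 3)
  have hc₁ : 0 < c₁ := by positivity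
  have hc₂ : 0 < c₂ := by positivity
  refine ⟨c₁ + c₂, by positivity, fun M hM g _ hg hgS => ⟨?_, ?_⟩⟩
  · refine (lintegral_time_lintegral_space_heatPotentialD2_le hp hM hg hgS).trans
      (ENNReal.ofReal_le_ofReal ?_)
    gcongr
    exact le_add_of_nonneg_right hc₂.le
  · refine (lintegral_space_lintegral_time_heatPotentialD2_le hp hM hg hgS).trans
      (ENNReal.ofReal_le_ofReal ?_)
    gcongr
    exact le_add_of_nonneg_left hc₁.le
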